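/- arXiv:2309.10143 — 5 statements merged into one kernel-verified Lean document; each statement's English description precedes it below -/
import Mathlib

section
/- Let a > 0 and let F : ℝ → ℝ be positive-definite on (−a, a). Then there exists a function F̃ : ℝ → ℝ that is positive-definite on all of ℝ and satisfies F̃(t) = F(t) for all t ∈ (−a, a). -/
/-!
Only the even part `Fₑ t = (F t + F (-t)) / 2` is seen by the quadratic forms, so it suffices to
extend `Fₑ` and to add back the odd part of `F` on `(-a, a)`.

For points `x₀ ≤ ⋯ ≤ x_N` the matrix `Fₑ (x_p - x_q)` is prescribed on a band of indices and is
positive semidefinite on every window inside the band. Such a band is completed one diagonal at a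
time: a missing corner entry only has to lie between the bounds imposed by the two windows obtained
by deleting its row or its column, and these bounds are compatible. The completed entries are
bounded by `F 0`, so compactness over finite point sets gives a positive-definite kernel `k` on `ℝ`
with `k s t = Fₑ (s - t)` for `|s - t| < a`. Averaging `β ↦ k (β + d) β` over ever larger boxes
spanned by finitely many directions and passing to a cluster point makes it translation invariant
without changing it near the diagonal.
-/

open Finset Filter Topology

/-- `F` is positive-definite on the symmetric set `I ⊆ ℝ`. -/
def IsPosDefOn (I : Set ℝ) (F : ℝ → ℝ) : Prop :=
  ∀ (n : ℕ) (x : Fin n → ℝ) (α : Fin n → ℝ),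
    (∀ i j, x i - x j ∈ I) →
    0 ≤ ∑ i, ∑ j, α i * α j * F (x i - x j)

namespace QuadraticMap

variable {V : Type*} [AddCommGroup V] [Module ℝ V] (Q : QuadraticForm ℝ V) (φ ψ : V →ₗ[ℝ] ℝ)

theorem map_smul_add_smul (a b : ℝ) (f g : V) :
    Q (a • f + b • g) = a ^ 2 * Q f + a * b * polar Q f g + b ^ 2 * Q g := by
  have h : Q (a • f + b • g) = Q (a • f) + Q (b • g) + polar Q (a • f) (b • g) := by
    simp only [polar]; ring
  rw [h, polar_smul_left, polar_smul_right, QuadraticMap.map_smul, QuadraticMap.map_smul]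
  simp only [smul_eq_mul]
  ring

theorem mul_le_mul_of_nonneg_on_ker (hφ : ∀ v, φ v = 0 → 0 ≤ Q v) (hψ : ∀ v, ψ v = 0 → 0 ≤ Q v)
    {f g : V} (hf : 0 < φ f * ψ f) (hg : φ g * ψ g < 0) :
    φ g * ψ g * Q f ≤ φ f * ψ f * Q g := by
  have h₁ := hφ (φ g • f + (-φ f) • g) (by simp; ring)
  have h₂ := hψ (ψ g • f + (-ψ f) • g) (by simp; ring)
  rw [map_smul_add_smul] at h₁ h₂
  -- this combination of `h₁` and `h₂` eliminates the polar term
  have key : 0 ≤ (φ f * ψ f * φ g ^ 2 - φ f ^ 2 * (φ g * ψ g)) *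
      (φ f * ψ f * Q g - φ g * ψ g * Q f) := by
    have h₃ := mul_nonneg (neg_nonneg.2 (mul_neg_of_pos_of_neg hf hg).le) h₁
    linear_combination (φ f * φ g) ^ 2 * h₂ + h₃
  have hpos : 0 < φ f * ψ f * φ g ^ 2 - φ f ^ 2 * (φ g * ψ g) := by
    have := left_ne_zero_of_mul hf.ne'
    have := left_ne_zero_of_mul hg.ne
    nlinarith [mul_pos hf (by positivity : 0 < φ g ^ 2),
      mul_pos (by positivity : 0 < φ f ^ 2) (neg_pos.2 hg)]
  linarith [(mul_nonneg_iff_of_pos_left hpos).1 key]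

theorem exists_nonneg_add_mul_of_nonneg_on_ker (hφ : ∀ v, φ v = 0 → 0 ≤ Q v)
    (hψ : ∀ v, ψ v = 0 → 0 ≤ Q v) (hpos : ∃ v, 0 < φ v * ψ v) (hneg : ∃ v, φ v * ψ v < 0) :
    ∃ c, ∀ v, 0 ≤ Q v + c * (φ v * ψ v) := by
  -- `c` has to be at least `ratio v` when `φ v * ψ v > 0` and at most `ratio v` when
  -- `φ v * ψ v < 0`; by `ratio_le` these constraints are compatible.
  set ratio : V → ℝ := fun v => -Q v / (φ v * ψ v)
  have ratio_le : ∀ f g, 0 < φ f * ψ f → φ g * ψ g < 0 → ratio f ≤ ratio g := by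
    intro f g hf hg
    simp only [ratio]
    rw [← neg_div_neg_eq (-Q g), neg_neg, div_le_div_iff₀ hf (neg_pos.2 hg)]
    linarith [mul_le_mul_of_nonneg_on_ker Q φ ψ hφ hψ hf hg]
  obtain ⟨f₀, hf₀⟩ := hpos
  obtain ⟨g₀, hg₀⟩ := hneg
  set S := ratio '' {v | 0 < φ v * ψ v}
  have hbdd : BddAbove S := ⟨ratio g₀, by rintro _ ⟨f, hf, rfl⟩; exact ratio_le f g₀ hf hg₀⟩
  refine ⟨sSup S, fun v => ?_⟩
  rcases lt_trichotomy (φ v * ψ v) 0 with h | h | h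
  · have hle : sSup S ≤ ratio v :=
      csSup_le ⟨_, f₀, hf₀, rfl⟩ (by rintro _ ⟨f, hf, rfl⟩; exact ratio_le f v hf h)
    rw [le_div_iff_of_neg h] at hle
    linarith
  · rcases mul_eq_zero.1 h with h' | h'
    · simpa [h] using hφ v h'
    · simpa [h] using hψ v h'
  · have hle : ratio v ≤ sSup S := le_csSup hbdd ⟨v, h, rfl⟩
    rw [div_le_iff₀ h] at hle
    linarith

end QuadraticMap

def windowForm (M : ℕ → ℕ → ℝ) (s : Finset ℕ) : QuadraticForm ℝ (ℕ → ℝ) :=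
  ∑ p ∈ s, ∑ q ∈ s, M p q • QuadraticMap.linMulLin (LinearMap.proj p) (LinearMap.proj q)

def PosSemidefOn (M : ℕ → ℕ → ℝ) (s : Finset ℕ) : Prop :=
  ∀ v, 0 ≤ windowForm M s v

def setCorner (M : ℕ → ℕ → ℝ) (i j : ℕ) (c : ℝ) : ℕ → ℕ → ℝ :=
  fun p q => if p = i ∧ q = j ∨ p = j ∧ q = i then c else M p q

section windowForm

variable {M M' : ℕ → ℕ → ℝ} {s t : Finset ℕ}

theorem windowForm_apply (v : ℕ → ℝ) :
    windowForm M s v = ∑ p ∈ s, ∑ q ∈ s, v p * v q * M p q := by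
  simp [windowForm, QuadraticMap.linMulLin_apply, mul_comm]

theorem windowForm_congr (h : ∀ p ∈ s, ∀ q ∈ s, M p q = M' p q) (v : ℕ → ℝ) :
    windowForm M s v = windowForm M' s v := by
  simp only [windowForm_apply]
  exact sum_congr rfl fun p hp => sum_congr rfl fun q hq => by rw [h p hp q hq]

theorem windowForm_of_subset (hts : t ⊆ s) {v : ℕ → ℝ} (hv : ∀ p ∈ s, p ∉ t → v p = 0) :
    windowForm M s v = windowForm M t v := by
  simp only [windowForm_apply]
  rw [← sum_subset hts fun p hp hpt => by simp [hv p hp hpt]]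
  exact sum_congr rfl fun p _ => (sum_subset hts fun q hq hqt => by simp [hv q hq hqt]).symm

theorem windowForm_setCorner {i j : ℕ} (hi : i ∈ s) (hj : j ∈ s) (hij : i ≠ j) (c : ℝ)
    (v : ℕ → ℝ) :
    windowForm (setCorner M i j c) s v =
      windowForm (setCorner M i j 0) s v + 2 * c * (v i * v j) := by
  have h : ∀ p q, setCorner M i j c p q = setCorner M i j 0 p q +
      ((if p = i ∧ q = j then c else 0) + if p = j ∧ q = i then c else 0) := by
    intro p q
    simp only [setCorner]
    split_ifs <;> grind
  simp only [windowForm_apply, h, mul_add, sum_add_distrib, mul_ite, mul_zero]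
  simp [ite_and, hi, hj]
  ring

theorem PosSemidefOn.congr (hM : PosSemidefOn M s) (h : ∀ p ∈ s, ∀ q ∈ s, M' p q = M p q) :
    PosSemidefOn M' s := fun v => (windowForm_congr h v).symm ▸ hM v

theorem PosSemidefOn.sum_sum_nonneg (hM : PosSemidefOn M s) {n : ℕ} (ι : Fin n → ℕ)
    (hι : ∀ i, ι i ∈ s) (α : Fin n → ℝ) : 0 ≤ ∑ i, ∑ j, α i * α j * M (ι i) (ι j) := by
  classical
  calc 0 ≤ windowForm M s fun p => ∑ i with ι i = p, α i := hM _
    _ = ∑ p ∈ s, ∑ i with ι i = p, ∑ q ∈ s, ∑ j with ι j = q, α i * α j * M p q := by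
      simp only [windowForm_apply, sum_mul, mul_sum]
      exact sum_congr rfl fun p _ => (sum_congr rfl fun q _ => sum_comm).trans sum_comm
    _ = ∑ i, ∑ j, α i * α j * M (ι i) (ι j) := by
      rw [← sum_fiberwise_of_maps_to (fun i _ => hι i)]
      refine sum_congr rfl fun p _ => sum_congr rfl fun i hi => ?_
      rw [← sum_fiberwise_of_maps_to (fun j _ => hι j)]
      refine sum_congr rfl fun q _ => sum_congr rfl fun j hj => ?_
      rw [(mem_filter.1 hi).2, (mem_filter.1 hj).2]

theorem PosSemidefOn.two_mul_abs_le (hM : PosSemidefOn M s) {p q : ℕ} (hpq : M p q = M q p)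
    (hp : p ∈ s) (hq : q ∈ s) : 2 * |M p q| ≤ M p p + M q q := by
  have h₁ := hM.sum_sum_nonneg ![p, q] (by simp [Fin.forall_fin_two, hp, hq]) ![1, 1]
  have h₂ := hM.sum_sum_nonneg ![p, q] (by simp [Fin.forall_fin_two, hp, hq]) ![1, -1]
  simp only [Fin.sum_univ_two, Matrix.cons_val_zero, Matrix.cons_val_one, hpq] at h₁ h₂
  rw [hpq]
  rcases abs_cases (M q p) with ⟨h, -⟩ | ⟨h, -⟩ <;> linarith

end windowForm

theorem PosSemidefOn.exists_setCorner {M : ℕ → ℕ → ℝ} {i m : ℕ}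
    (h₁ : PosSemidefOn M (Icc (i + 1) (i + m + 1))) (h₂ : PosSemidefOn M (Icc i (i + m))) :
    ∃ c, PosSemidefOn (setCorner M i (i + m + 1) c) (Icc i (i + m + 1)) := by
  set j := i + m + 1
  have hi : i ∈ Icc i j := by simp only [mem_Icc]; omega
  have hj : j ∈ Icc i j := by simp only [mem_Icc]; omega
  have hij : i ≠ j := by omega
  have agree : ∀ t ⊆ Icc i j, i ∉ t ∨ j ∉ t → ∀ p ∈ t, ∀ q ∈ t, setCorner M i j 0 p q = M p q := by
    intro t _ ht p hp q hq
    simp only [setCorner]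
    rw [if_neg]
    rintro (⟨rfl, rfl⟩ | ⟨rfl, rfl⟩) <;> tauto
  have nonneg_of_vi : ∀ v : ℕ → ℝ, v i = 0 →
      0 ≤ windowForm (setCorner M i j 0) (Icc i j) v := by
    intro v hv
    have hsub : Icc (i + 1) j ⊆ Icc i j := Icc_subset_Icc (by omega) le_rfl
    rw [windowForm_of_subset hsub fun p hp hpt => by
      obtain rfl : p = i := by simp only [mem_Icc] at hp hpt; omega
      exact hv, windowForm_congr (agree _ hsub (.inl (by simp)))]
    exact h₁ v
  have nonneg_of_vj : ∀ v : ℕ → ℝ, v j = 0 →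
      0 ≤ windowForm (setCorner M i j 0) (Icc i j) v := by
    intro v hv
    have hsub : Icc i (i + m) ⊆ Icc i j := Icc_subset_Icc le_rfl (by omega)
    rw [windowForm_of_subset hsub fun p hp hpt => by
      obtain rfl : p = j := by simp only [mem_Icc] at hp hpt; omega
      exact hv, windowForm_congr (agree _ hsub (.inr (by simp [j])))]
    exact h₂ v
  obtain ⟨c, hc⟩ := QuadraticMap.exists_nonneg_add_mul_of_nonneg_on_ker _
    (LinearMap.proj i) (LinearMap.proj j) nonneg_of_vi nonneg_of_vj
    ⟨fun _ => 1, by simp⟩ ⟨fun p => if p = i then 1 else -1, by simp [hij.symm]⟩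
  refine ⟨c / 2, fun v => ?_⟩
  rw [windowForm_setCorner hi hj hij]
  convert hc v using 2
  simp only [LinearMap.proj_apply]
  ring

theorem Monotone.abs_sub_lt_of_mem_Icc {x : ℕ → ℝ} (hx : Monotone x) {a : ℝ} {i j p q : ℕ}
    (h : |x j - x i| < a) (hp : p ∈ Icc i j) (hq : q ∈ Icc i j) : |x p - x q| < a := by
  rw [mem_Icc] at hp hq
  have := hx hp.1; have := hx hp.2; have := hx hq.1; have := hx hq.2
  rw [abs_lt] at h ⊢
  constructor <;> linarith

section BandCompletion

variable {a : ℝ} {x : ℕ → ℝ} {M₀ : ℕ → ℕ → ℝ}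

/-- All missing corners `(i, i + ℓ + 1)` can be filled simultaneously: each window of width `ℓ + 1`
contains exactly one of them. -/
theorem exists_posSemidefOn_windows_succ (hx : Monotone x)
    (hband : ∀ i j, |x j - x i| < a → PosSemidefOn M₀ (Icc i j)) {ℓ : ℕ} {M : ℕ → ℕ → ℝ}
    (hM : ∀ p q, M p q = M q p) (hMM₀ : ∀ p q, |x p - x q| < a → M p q = M₀ p q)
    (hℓ : ∀ i m, m ≤ ℓ → PosSemidefOn M (Icc i (i + m))) :
    ∃ M' : ℕ → ℕ → ℝ, (∀ p q, M' p q = M' q p) ∧ (∀ p q, |x p - x q| < a → M' p q = M₀ p q) ∧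
      ∀ i m, m ≤ ℓ + 1 → PosSemidefOn M' (Icc i (i + m)) := by
  choose c hc using fun i => PosSemidefOn.exists_setCorner
    (by simpa only [add_right_comm] using hℓ (i + 1) ℓ le_rfl) (hℓ i ℓ le_rfl)
  set M' : ℕ → ℕ → ℝ := fun p q =>
    if max p q = min p q + (ℓ + 1) ∧ ¬|x p - x q| < a then c (min p q) else M p q
  have hM'M₀ : ∀ p q, |x p - x q| < a → M' p q = M₀ p q := by
    intro p q h
    simp [M', h, hMM₀]
  refine ⟨M', fun p q => ?_, hM'M₀, fun i m hm => ?_⟩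
  · simp only [M', min_comm q p, max_comm q p, abs_sub_comm (x q) (x p), hM q p]
  rcases hm.lt_or_eq with hm | rfl
  · refine (hℓ i m (by omega)).congr fun p hp q hq => ?_
    simp only [mem_Icc] at hp hq
    simp only [M']
    rw [if_neg (by omega)]
  by_cases hb : |x (i + ℓ + 1) - x i| < a
  · exact (hband i _ hb).congr fun p hp q hq => hM'M₀ p q (hx.abs_sub_lt_of_mem_Icc hb hp hq)
  refine (hc i).congr fun p hp q hq => ?_
  simp only [mem_Icc] at hp hq
  simp only [M', setCorner]
  by_cases hcorner : p = i ∧ q = i + ℓ + 1 ∨ p = i + ℓ + 1 ∧ q = i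
  · rcases hcorner with ⟨rfl, rfl⟩ | ⟨rfl, rfl⟩
    · rw [if_pos ⟨by omega, by rwa [abs_sub_comm]⟩, if_pos (.inl ⟨rfl, rfl⟩),
        min_eq_left (by omega)]
    · rw [if_pos ⟨by omega, hb⟩, if_pos (.inr ⟨rfl, rfl⟩), min_eq_right (by omega)]
  · rw [if_neg hcorner, if_neg (by omega)]

theorem exists_posSemidefOn_bandCompletion (ha : 0 < a) (hx : Monotone x)
    (hM₀ : ∀ p q, M₀ p q = M₀ q p) (hband : ∀ i j, |x j - x i| < a → PosSemidefOn M₀ (Icc i j))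
    (N : ℕ) :
    ∃ M : ℕ → ℕ → ℝ, (∀ p q, M p q = M q p) ∧ (∀ p q, |x p - x q| < a → M p q = M₀ p q) ∧
      PosSemidefOn M (Icc 0 N) := by
  suffices ∀ ℓ, ∃ M : ℕ → ℕ → ℝ, (∀ p q, M p q = M q p) ∧
      (∀ p q, |x p - x q| < a → M p q = M₀ p q) ∧ ∀ i m, m ≤ ℓ → PosSemidefOn M (Icc i (i + m)) by
    obtain ⟨M, hM, hMM₀, hN⟩ := this N
    exact ⟨M, hM, hMM₀, by simpa using hN 0 N le_rfl⟩
  intro ℓ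
  induction ℓ with
  | zero =>
    refine ⟨M₀, hM₀, fun _ _ _ => rfl, fun i m hm => ?_⟩
    obtain rfl : m = 0 := by omega
    exact hband i (i + 0) (by simpa using ha)
  | succ ℓ ih =>
    obtain ⟨M, hM, hMM₀, hℓ⟩ := ih
    exact exists_posSemidefOn_windows_succ hx hband hM hMM₀ hℓ

end BandCompletion

def IsPosDefKernelOn (S : Set ℝ) (k : ℝ → ℝ → ℝ) : Prop :=
  ∀ (n : ℕ) (y α : Fin n → ℝ), (∀ i, y i ∈ S) → 0 ≤ ∑ i, ∑ j, α i * α j * k (y i) (y j)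

noncomputable def evenPart (F : ℝ → ℝ) (t : ℝ) : ℝ := (F t + F (-t)) / 2

theorem sum_sum_mul_eq_zero_of_odd {O : ℝ → ℝ} (hO : ∀ t, O (-t) = -O t) {n : ℕ}
    (x α : Fin n → ℝ) : ∑ i, ∑ j, α i * α j * O (x i - x j) = 0 := by
  have h : ∑ i, ∑ j, α i * α j * O (x i - x j) = -∑ i, ∑ j, α i * α j * O (x i - x j) := by
    conv_rhs => rw [sum_comm]
    simp only [← sum_neg_distrib]
    refine sum_congr rfl fun i _ => sum_congr rfl fun j _ => ?_
    rw [← neg_sub, hO]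
    ring
  linarith

theorem IsPosDefOn.of_add_neg_eq {I : Set ℝ} {F G : ℝ → ℝ} (hF : IsPosDefOn I F)
    (h : ∀ t, F t + F (-t) = G t + G (-t)) : IsPosDefOn I G := by
  intro n x α hx
  have hodd := sum_sum_mul_eq_zero_of_odd (O := G - F) (fun t => by
    simp only [Pi.sub_apply]; linarith [h t, h (-t), neg_neg t]) x α
  simp only [Pi.sub_apply, mul_sub, sum_sub_distrib] at hodd
  linarith [hF n x α hx]

theorem IsPosDefOn.posSemidefOn {I : Set ℝ} {F : ℝ → ℝ} (hF : IsPosDefOn I F) {x : ℕ → ℝ}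
    {s : Finset ℕ} (hs : ∀ p ∈ s, ∀ q ∈ s, x p - x q ∈ I) :
    PosSemidefOn (fun p q => F (x p - x q)) s := by
  intro v
  have e : ∀ g : ℕ → ℝ, ∑ p ∈ s, g p = ∑ i : Fin s.card, g (s.equivFin.symm i) := fun g => by
    rw [← sum_coe_sort s, ← s.equivFin.symm.sum_comp]
  simp only [windowForm_apply, e]
  exact hF _ _ _ fun i j => hs _ (s.equivFin.symm i).2 _ (s.equivFin.symm j).2

theorem Finset.exists_monotone_cover {α : Type*} [LinearOrder α] [Nonempty α] (X : Finset α) :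
    ∃ (x : ℕ → α) (N : ℕ), Monotone x ∧ ∀ s ∈ X, ∃ p ≤ N, x p = s := by
  rcases X.eq_empty_or_nonempty with rfl | hX
  · exact ⟨fun _ => Classical.arbitrary α, 0, monotone_const, by simp⟩
  have hcard : 0 < X.card := hX.card_pos
  set e := X.orderEmbOfFin rfl
  refine ⟨fun p => e ⟨min p (X.card - 1), by omega⟩, X.card - 1, fun p q hpq => ?_, fun s hs => ?_⟩
  · exact e.monotone (Fin.mk_le_mk.2 (min_le_min_right _ hpq))
  · obtain ⟨i, rfl⟩ : s ∈ Set.range e := by rwa [Finset.range_orderEmbOfFin]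
    exact ⟨i, by omega, congrArg e (Fin.ext (min_eq_left (by omega)))⟩

theorem exists_isPosDefKernelOn_finset_extension {a : ℝ} (ha : 0 < a) {F : ℝ → ℝ}
    (hF : IsPosDefOn (Set.Ioo (-a) a) F) (heven : ∀ t, F (-t) = F t) (X : Finset ℝ) :
    ∃ k : ℝ → ℝ → ℝ, IsPosDefKernelOn X k ∧ (∀ s ∈ X, ∀ t ∈ X, |s - t| < a → k s t = F (s - t)) ∧
      ∀ s t, |k s t| ≤ F 0 := by
  obtain ⟨x, N, hx, hX⟩ := X.exists_monotone_cover
  -- off `X` the index is arbitrary but still at most `N`, which keeps the kernel bounded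
  have hidx_exists : ∀ s, ∃ p ≤ N, s ∈ X → x p = s := fun s => by
    by_cases hs : s ∈ X
    · obtain ⟨p, hp, rfl⟩ := hX s hs
      exact ⟨p, hp, fun _ => rfl⟩
    · exact ⟨0, N.zero_le, fun h => absurd h hs⟩
  choose idx hidxN hidx using hidx_exists
  have hband : ∀ i j, |x j - x i| < a → PosSemidefOn (fun p q => F (x p - x q)) (Icc i j) :=
    fun i j h => hF.posSemidefOn fun p hp q hq => by
      simpa only [Set.mem_Ioo, abs_lt] using hx.abs_sub_lt_of_mem_Icc h hp hq
  obtain ⟨M, hM, hMF, hMpsd⟩ := exists_posSemidefOn_bandCompletion ha hx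
    (fun p q => by rw [← heven, neg_sub]) hband N
  have hmem : ∀ s, idx s ∈ Icc 0 N := fun s => mem_Icc.2 ⟨(idx s).zero_le, hidxN s⟩
  refine ⟨fun s t => M (idx s) (idx t), fun n y α _ => hMpsd.sum_sum_nonneg (idx ∘ y)
    (fun i => hmem _) α, fun s hs t ht hst => ?_, fun s t => ?_⟩
  · show M (idx s) (idx t) = F (s - t)
    rw [hMF (idx s) (idx t) (by rwa [hidx s hs, hidx t ht]), hidx s hs, hidx t ht]
  · have hdiag : ∀ p, M p p = F 0 := fun p => by simpa using hMF p p (by simpa using ha)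
    have := hMpsd.two_mul_abs_le (hM _ _) (hmem s) (hmem t)
    rw [hdiag, hdiag] at this
    linarith

theorem IsCompact.exists_forall_mem_of_eventually_mem {X ι : Type*} [TopologicalSpace X]
    {K : Set X} (hK : IsCompact K) {l : Filter ι} [l.NeBot] {η : ι → X} (hη : ∀ i, η i ∈ K) :
    ∃ x ∈ K, ∀ C, IsClosed C → (∀ᶠ i in l, η i ∈ C) → x ∈ C := by
  obtain ⟨x, hxK, hx⟩ := hK (f := l.map η) (tendsto_principal.2 (Eventually.of_forall hη))
  exact ⟨x, hxK, fun C hC hev => hC.closure_subset (hx.mem_closure_of_mem (s := C) hev)⟩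

theorem isCompact_setOf_forall_abs_le (ι : Type*) (C : ℝ) :
    IsCompact {f : ι → ℝ | ∀ i, |f i| ≤ C} := by
  convert isCompact_univ_pi fun _ : ι => isCompact_Icc (a := -C) (b := C) using 1
  ext f
  simp [abs_le, Pi.le_def, forall_and]

theorem exists_isPosDefKernelOn_univ_extension {a : ℝ} (ha : 0 < a) {F : ℝ → ℝ}
    (hF : IsPosDefOn (Set.Ioo (-a) a) F) (heven : ∀ t, F (-t) = F t) :
    ∃ k : ℝ → ℝ → ℝ, IsPosDefKernelOn Set.univ k ∧ (∀ s t, |s - t| < a → k s t = F (s - t)) ∧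
      ∀ s t, |k s t| ≤ F 0 := by
  choose η hηpd hηF hηC using exists_isPosDefKernelOn_finset_extension ha hF heven
  have hK : IsCompact {k : ℝ → ℝ → ℝ | ∀ s t, |k s t| ≤ F 0} := by
    convert isCompact_univ_pi fun _ : ℝ => isCompact_setOf_forall_abs_le ℝ (F 0) using 1
    ext k
    simp
  obtain ⟨k, hkC, hk⟩ := hK.exists_forall_mem_of_eventually_mem (l := atTop) hηC
  refine ⟨k, fun n y α _ => hk {k | 0 ≤ ∑ i, ∑ j, α i * α j * k (y i) (y j)}
    (isClosed_le continuous_const (by fun_prop)) ?_,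
    fun s t hst => hk {k | k s t = F (s - t)} (isClosed_eq (by fun_prop) continuous_const) ?_, hkC⟩
  · filter_upwards [eventually_ge_atTop (univ.image y)] with X hX
    exact hηpd X n y α fun i => hX (mem_image_of_mem y (mem_univ i))
  · filter_upwards [eventually_ge_atTop {s, t}] with X hX
    exact hηF X s (hX (by simp)) t (hX (by simp)) hst

/-- `boxAverage R [τ₁, …, τₘ] g β` is the mean of `g (β + r₁ τ₁ + ⋯ + rₘ τₘ)` over `0 ≤ rᵢ ≤ R`. -/
noncomputable def boxAverage (R : ℕ) : List ℝ → (ℝ → ℝ) → ℝ → ℝ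
  | [], g => g
  | τ :: L, g => fun β => (∑ r ∈ range (R + 1), boxAverage R L g (β + r * τ)) / (R + 1)

section BoxAverage

variable {R : ℕ}

theorem boxAverage_cons (τ : ℝ) (L : List ℝ) (g : ℝ → ℝ) (β : ℝ) :
    boxAverage R (τ :: L) g β = (∑ r ∈ range (R + 1), boxAverage R L g (β + r * τ)) / (R + 1) :=
  rfl

theorem boxAverage_mono {f g : ℝ → ℝ} (h : ∀ β, f β ≤ g β) (L : List ℝ) (β : ℝ) :
    boxAverage R L f β ≤ boxAverage R L g β := by
  induction L generalizing β with
  | nil => exact h β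
  | cons τ L ih =>
    rw [boxAverage_cons, boxAverage_cons]
    gcongr with r
    exact ih _

theorem boxAverage_const (L : List ℝ) (c β : ℝ) : boxAverage R L (fun _ => c) β = c := by
  induction L generalizing β with
  | nil => rfl
  | cons τ L ih =>
    rw [boxAverage_cons]
    simp only [ih, sum_const, card_range, nsmul_eq_mul]
    field_simp
    push_cast
    ring

theorem boxAverage_sum {ι : Type*} (s : Finset ι) (h : ι → ℝ → ℝ) (L : List ℝ) (β : ℝ) :
    boxAverage R L (fun β => ∑ p ∈ s, h p β) β = ∑ p ∈ s, boxAverage R L (h p) β := by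
  induction L generalizing β with
  | nil => rfl
  | cons τ L ih =>
    simp only [boxAverage_cons, ih, ← sum_div]
    rw [sum_comm]

theorem boxAverage_const_mul (c : ℝ) (g : ℝ → ℝ) (L : List ℝ) (β : ℝ) :
    boxAverage R L (fun β => c * g β) β = c * boxAverage R L g β := by
  induction L generalizing β with
  | nil => rfl
  | cons τ L ih =>
    simp only [boxAverage_cons, ih, ← mul_sum, mul_div_assoc]

theorem boxAverage_comp_add (g : ℝ → ℝ) (σ : ℝ) (L : List ℝ) (β : ℝ) :
    boxAverage R L (fun β => g (β + σ)) β = boxAverage R L g (β + σ) := by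
  induction L generalizing β with
  | nil => rfl
  | cons τ L ih =>
    simp only [boxAverage_cons, ih, add_right_comm]

theorem abs_boxAverage_le {g : ℝ → ℝ} {C : ℝ} (hg : ∀ β, |g β| ≤ C) (L : List ℝ) (β : ℝ) :
    |boxAverage R L g β| ≤ C := by
  rw [abs_le]
  constructor
  · simpa only [boxAverage_const] using
      boxAverage_mono (R := R) (fun β => (abs_le.1 (hg β)).1) L β
  · simpa only [boxAverage_const] using
      boxAverage_mono (R := R) (fun β => (abs_le.1 (hg β)).2) L β

/-- Averaging along `τ` telescopes, so shifting by `τ` moves the average by at most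
`2 C / (R + 1)`. -/
theorem abs_boxAverage_comp_add_sub_le {g : ℝ → ℝ} {C : ℝ} (hg : ∀ β, |g β| ≤ C) {τ : ℝ}
    {L : List ℝ} (hτ : τ ∈ L) (β : ℝ) :
    |boxAverage R L (fun β => g (β + τ)) β - boxAverage R L g β| ≤ 2 * C / (R + 1) := by
  induction L generalizing β with
  | nil => simp at hτ
  | cons σ L ih =>
    rw [boxAverage_cons, boxAverage_cons, ← sub_div, ← sum_sub_distrib, abs_div,
      abs_of_pos (by positivity : (0 : ℝ) < R + 1)]
    gcongr
    rcases List.mem_cons.1 hτ with rfl | hτ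
    · have htel : ∀ r : ℕ, boxAverage R L (fun β => g (β + τ)) (β + r * τ) =
          boxAverage R L g (β + (r + 1 : ℕ) * τ) := fun r => by
        rw [boxAverage_comp_add]; push_cast; ring_nf
      simp only [htel]
      rw [sum_range_sub (fun r : ℕ => boxAverage R L g (β + r * τ))]
      calc _ ≤ |boxAverage R L g (β + (R + 1 : ℕ) * τ)| + |boxAverage R L g (β + (0 : ℕ) * τ)| :=
            abs_sub _ _
        _ ≤ C + C := add_le_add (abs_boxAverage_le hg L _) (abs_boxAverage_le hg L _)
        _ = 2 * C := by ring
    · calc _ ≤ ∑ r ∈ range (R + 1), 2 * C / (R + 1) :=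
            (abs_sum_le_sum_abs _ _).trans (sum_le_sum fun r _ => ih hτ _)
        _ = 2 * C := by
            rw [sum_const, card_range, nsmul_eq_mul]
            field_simp
            push_cast
            ring

end BoxAverage

theorem IsPosDefKernelOn.sum_sum_boxAverage_ge {k : ℝ → ℝ → ℝ} (hk : IsPosDefKernelOn Set.univ k)
    {C : ℝ} (hC : ∀ s t, |k s t| ≤ C) (R : ℕ) {L : List ℝ} {n : ℕ} (x α : Fin n → ℝ)
    (hx : ∀ i, x i ∈ L) :
    -((∑ i, ∑ j, |α i * α j|) * (2 * C / (R + 1))) ≤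
      ∑ i, ∑ j, α i * α j * boxAverage R L (fun β => k (β + (x i - x j)) β) 0 := by
  set ε := 2 * C / (R + 1)
  have hpos : 0 ≤ ∑ i, ∑ j, α i * α j * boxAverage R L (fun β => k (β + x i) (β + x j)) 0 := by
    have := boxAverage_mono (R := R) (f := fun _ => 0)
      (fun β => hk n (fun i => β + x i) α fun _ => trivial) L 0
    simpa only [boxAverage_const, boxAverage_sum, boxAverage_const_mul] using this
  have hterm : ∀ i j, α i * α j * boxAverage R L (fun β => k (β + x i) (β + x j)) 0 -
      |α i * α j| * ε ≤ α i * α j * boxAverage R L (fun β => k (β + (x i - x j)) β) 0 := by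
    intro i j
    -- `β ↦ k (β + x i) (β + x j)` is the shift by `x j` of `β ↦ k (β + (x i - x j)) β`
    have h := abs_boxAverage_comp_add_sub_le (R := R) (g := fun β => k (β + (x i - x j)) β)
      (fun β => hC _ _) (hx j) 0
    simp only [add_add_sub_cancel] at h
    set A := boxAverage R L (fun β => k (β + x i) (β + x j)) 0
    set B := boxAverage R L (fun β => k (β + (x i - x j)) β) 0
    calc α i * α j * A - |α i * α j| * ε ≤ α i * α j * A - |α i * α j| * |A - B| := by gcongr
      _ ≤ α i * α j * A - α i * α j * (A - B) := by
        rw [← abs_mul]; exact sub_le_sub_left (le_abs_self _) _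
      _ = α i * α j * B := by ring
  calc -((∑ i, ∑ j, |α i * α j|) * ε)
      ≤ ∑ i, ∑ j, α i * α j * boxAverage R L (fun β => k (β + x i) (β + x j)) 0 -
          ∑ i, ∑ j, |α i * α j| * ε := by simp only [sum_mul]; linarith
    _ = ∑ i, ∑ j, (α i * α j * boxAverage R L (fun β => k (β + x i) (β + x j)) 0 -
          |α i * α j| * ε) := by simp only [sum_sub_distrib]
    _ ≤ _ := sum_le_sum fun i _ => sum_le_sum fun j _ => hterm i j

theorem IsPosDefKernelOn.exists_isPosDefOn_univ {k : ℝ → ℝ → ℝ} (hk : IsPosDefKernelOn Set.univ k)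
    {C : ℝ} (hC : ∀ s t, |k s t| ≤ C) :
    ∃ G : ℝ → ℝ, IsPosDefOn Set.univ G ∧ ∀ d c, (∀ s, k (s + d) s = c) → G d = c := by
  set η : Finset ℝ × ℕ → ℝ → ℝ := fun SR d => boxAverage SR.2 SR.1.toList (fun β => k (β + d) β) 0
  obtain ⟨G, -, hG⟩ := (isCompact_setOf_forall_abs_le ℝ C).exists_forall_mem_of_eventually_mem
    (l := atTop) (η := η) fun SR d => abs_boxAverage_le (fun β => hC _ _) _ _
  refine ⟨G, fun n x α _ => ?_, fun d c hdc => hG {G | G d = c}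
    (isClosed_eq (continuous_apply d) continuous_const) (Eventually.of_forall fun SR => ?_)⟩
  · set W := ∑ i, ∑ j, |α i * α j|
    have hC₀ : 0 ≤ C := (abs_nonneg _).trans (hC 0 0)
    have hbound : ∀ R₀ : ℕ, -(W * (2 * C / (R₀ + 1))) ≤ ∑ i, ∑ j, α i * α j * G (x i - x j) :=
      fun R₀ => hG {G | -(W * (2 * C / (R₀ + 1))) ≤ ∑ i, ∑ j, α i * α j * G (x i - x j)}
        (isClosed_le continuous_const (by fun_prop)) (by
        filter_upwards [eventually_ge_atTop (univ.image x, R₀)] with ⟨S, R⟩ hSR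
        have hx : ∀ i, x i ∈ S.toList :=
          fun i => mem_toList.2 (hSR.1 (mem_image_of_mem x (mem_univ i)))
        refine le_trans ?_ (hk.sum_sum_boxAverage_ge hC R x α hx)
        have : (R₀ : ℝ) ≤ R := by exact_mod_cast hSR.2
        gcongr)
    have hlim : Tendsto (fun R : ℕ => -(W * (2 * C / (R + 1)))) atTop (𝓝 0) := by
      have := ((tendsto_one_div_add_atTop_nhds_zero_nat (𝕜 := ℝ)).const_mul (W * (2 * C))).neg
      rw [mul_zero, neg_zero] at this
      convert this using 2
      ring
    exact le_of_tendsto' hlim hbound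
  · simp [η, hdc, boxAverage_const]

/-- Krein–Artjomenko extension theorem: every function positive-definite on `(-a, a)` extends
to a positive-definite function on all of `ℝ`. -/
theorem posdef_extension_real_line (a : ℝ) (ha : 0 < a) (F : ℝ → ℝ)
    (hF : IsPosDefOn (Set.Ioo (-a) a) F) :
    ∃ G : ℝ → ℝ, IsPosDefOn Set.univ G ∧ ∀ t ∈ Set.Ioo (-a) a, G t = F t := by
  have hFe : IsPosDefOn (Set.Ioo (-a) a) (evenPart F) :=
    hF.of_add_neg_eq fun t => by simp only [evenPart, neg_neg]; ring
  obtain ⟨k, hk, hkF, hkC⟩ := exists_isPosDefKernelOn_univ_extension ha hFe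
    fun t => by simp only [evenPart, neg_neg]; ring
  obtain ⟨G, hG, hGk⟩ := hk.exists_isPosDefOn_univ hkC
  have hGF : ∀ t ∈ Set.Ioo (-a) a, G t = evenPart F t := fun t ht => hGk t _ fun s => by
    rw [hkF _ _ (by rwa [add_sub_cancel_left, abs_lt]), add_sub_cancel_left]
  have hneg : ∀ t, -t ∈ Set.Ioo (-a) a ↔ t ∈ Set.Ioo (-a) a := fun t => by
    rw [Set.neg_mem_Ioo_iff, neg_neg]
  refine ⟨(Set.Ioo (-a) a).piecewise F G, hG.of_add_neg_eq fun t => ?_,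
    fun t ht => Set.piecewise_eq_of_mem _ _ _ ht⟩
  by_cases ht : t ∈ Set.Ioo (-a) a
  · rw [Set.piecewise_eq_of_mem _ _ _ ht, Set.piecewise_eq_of_mem _ _ _ ((hneg t).2 ht),
      hGF t ht, hGF _ ((hneg t).2 ht), evenPart, evenPart, neg_neg]
    ring
  · rw [Set.piecewise_eq_of_notMem _ _ _ ht, Set.piecewise_eq_of_notMem _ _ _ (mt (hneg t).1 ht)]
end

section
/- Let X = X₁ ∪ X₂, S = X₁ ∩ X₂, Ω = (X₁ × X₁) ∪ (X₂ × X₂), let K_Ω be a partially reproducing kernel on Ω, and let (H, φ) be a realization of K_S = K_Ω|_{S × S}. Then there exist unique maps v : X₁ → H and w : X₂ → H such that ⟪v x, φ s⟫ = K_Ω(x, s) for all x ∈ X₁, s ∈ S and ⟪w y, φ s⟫ = K_Ω(y, s) for all y ∈ X₂, s ∈ S; and the function K⋆ : X × X → ℝ defined by K⋆(x,y) = K_Ω(x,y) for (x,y) ∈ Ω, K⋆(x,y) = ⟪v x, w y⟫ for x ∈ X₁ ∖ X₂ and y ∈ X₂ ∖ X₁, and K⋆(x,y) = ⟪v y, w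 x⟫ for x ∈ X₂ ∖ X₁ and y ∈ X₁ ∖ X₂, is a completion of K_Ω. (K⋆ is the canonical completion of K_Ω, satisfying K⋆(x,y) = ⟨k_{x,S}, k_{y,S}⟩_{ℋ(K_S)} for x ∈ X₁, y ∈ X₂.) -/
open scoped RealInnerProductSpace

/-- A reproducing kernel on a set `X`. -/
def IsKernel {X : Type*} (K : X → X → ℝ) : Prop :=
  (∀ x y, K x y = K y x) ∧
  ∀ (n : ℕ) (α : Fin n → ℝ) (x : Fin n → X),
    0 ≤ ∑ i, ∑ j, α i * α j * K (x i) (x j)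

/-- `KΩ` is a partially reproducing kernel on `Ω ⊆ X × X`. -/
def IsPartialKernel {X : Type*} (Ω : Set (X × X)) (KΩ : X → X → ℝ) : Prop :=
  ∀ A : Set X, A ×ˢ A ⊆ Ω → IsKernel (fun a b : A => KΩ a b)

/-- `K` is a completion of `KΩ` on the domain `Ω`. -/
def IsCompletion {X : Type*} (Ω : Set (X × X)) (KΩ : X → X → ℝ) (K : X → X → ℝ) : Prop :=
  IsKernel K ∧ ∀ x y, (x, y) ∈ Ω → K x y = KΩ x y

/-!
For a kernel `K` on `Y` realized over `S ⊆ Y` by `(H, φ)`, positivity of `K` on `{y} ∪ S` bounds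
`∑ c s * K y s` by `√(K y y) * ‖∑ c s • φ s‖`, so the Riesz representation gives a unique `v y`
with `⟪v y, φ s⟫ = K y s`; the same positivity, tested against the dense span of `φ`, shows that
the Schur complement `K x y - ⟪v x, v y⟫` is again a kernel. On `X₁ ∪ X₂` the maps `v` and `w`
agree with `φ` on `S`, and `K⋆` is the Gram kernel of `v ∪ w` plus the block-diagonal sum of the
two Schur complements, hence a kernel.
-/

namespace IsKernel

variable {Y : Type*} {K : Y → Y → ℝ}

lemma sum_nonneg (hK : IsKernel K) {ι : Type*} [Fintype ι] (α : ι → ℝ) (x : ι → Y) :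
    0 ≤ ∑ i, ∑ k, α i * α k * K (x i) (x k) := by
  let e := (Fintype.equivFin ι).symm
  calc 0 ≤ _ := hK.2 _ (α ∘ e) (x ∘ e)
    _ = _ := Fintype.sum_equiv e _ (fun i => ∑ k, α i * α k * K (x i) (x k)) fun i =>
      Fintype.sum_equiv e _ (fun k => α (e i) * α k * K (x (e i)) (x k)) fun _ => rfl

lemma add (hK : IsKernel K) {K' : Y → Y → ℝ} (hK' : IsKernel K') :
    IsKernel fun a b => K a b + K' a b := by
  refine ⟨fun a b => by simp only [hK.1 a, hK'.1 a], fun n α x => ?_⟩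
  simp only [mul_add, Finset.sum_add_distrib]
  exact add_nonneg (hK.2 n α x) (hK'.2 n α x)

lemma two_mul_sum_le (hK : IsKernel K) {ι κ : Type*} [Fintype ι] [Fintype κ]
    (α : ι → ℝ) (x : ι → Y) (β : κ → ℝ) (z : κ → Y) :
    2 * ∑ i, ∑ k, α i * β k * K (x i) (z k) ≤
      ∑ i, ∑ i', α i * α i' * K (x i) (x i') + ∑ k, ∑ k', β k * β k' * K (z k) (z k') := by
  have h := hK.sum_nonneg (Sum.elim α (-β)) (Sum.elim x z)
  have hswap : ∑ k, ∑ i, β k * α i * K (z k) (x i) = ∑ i, ∑ k, α i * β k * K (x i) (z k) := by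
    rw [Finset.sum_comm]
    exact Finset.sum_congr rfl fun i _ => Finset.sum_congr rfl fun k _ => by rw [hK.1]; ring
  simp only [Fintype.sum_sum_type, Sum.elim_inl, Sum.elim_inr, Pi.neg_apply, neg_mul, mul_neg,
    Finset.sum_neg_distrib, Finset.sum_add_distrib, hswap] at h
  linarith

lemma comp (hK : IsKernel K) {Z : Type*} (f : Z → Y) : IsKernel fun a b => K (f a) (f b) :=
  ⟨fun _ _ => hK.1 _ _, fun n α x => hK.2 n α (f ∘ x)⟩

lemma of_blocks (p : Y → Prop) (h₁ : IsKernel fun a b : {y // p y} => K a b)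
    (h₂ : IsKernel fun a b : {y // ¬p y} => K a b)
    (hcross : ∀ a b, p a → ¬p b → K a b = 0 ∧ K b a = 0) : IsKernel K := by
  classical
  refine ⟨fun a b => ?_, fun n α x => ?_⟩
  · by_cases ha : p a <;> by_cases hb : p b
    · exact h₁.1 ⟨a, ha⟩ ⟨b, hb⟩
    · rw [(hcross a b ha hb).1, (hcross a b ha hb).2]
    · rw [(hcross b a hb ha).1, (hcross b a hb ha).2]
    · exact h₂.1 ⟨a, ha⟩ ⟨b, hb⟩
  · let q : Fin n → Prop := fun i => p (x i)
    have hsplit (f : Fin n → ℝ) : ∑ i, f i = ∑ i : {i // q i}, f i + ∑ i : {i // ¬q i}, f i :=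
      (Fintype.sum_subtype_add_sum_subtype q f).symm
    have hcross₁ (i : {i // q i}) (k : {i // ¬q i}) : K (x i) (x k) = 0 := (hcross _ _ i.2 k.2).1
    have hcross₂ (i : {i // q i}) (k : {i // ¬q i}) : K (x k) (x i) = 0 := (hcross _ _ i.2 k.2).2
    simp only [hsplit, hcross₁, hcross₂, mul_zero, Finset.sum_const_zero, add_zero, zero_add]
    exact add_nonneg (h₁.sum_nonneg (fun i : {i // q i} => α i) fun i => ⟨x i, i.2⟩)
      (h₂.sum_nonneg (fun i : {i // ¬q i} => α i) fun i => ⟨x i, i.2⟩)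

end IsKernel

section Hilbert

variable {H : Type*} [NormedAddCommGroup H] [InnerProductSpace ℝ H]

lemma inner_sum_smul_self {ι : Type*} (s : Finset ι) (α : ι → ℝ) (u : ι → H) :
    ⟪∑ i ∈ s, α i • u i, ∑ i ∈ s, α i • u i⟫ = ∑ i ∈ s, ∑ k ∈ s, α i * α k * ⟪u i, u k⟫ := by
  simp only [sum_inner, inner_sum, real_inner_smul_left, real_inner_smul_right]
  exact Finset.sum_congr rfl fun i _ => Finset.sum_congr rfl fun k _ => by
    rw [real_inner_comm]; ring

lemma isKernel_inner {Y : Type*} (u : Y → H) : IsKernel fun a b => ⟪u a, u b⟫ :=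
  ⟨fun _ _ => real_inner_comm _ _, fun _ α x => by
    rw [← inner_sum_smul_self]; exact real_inner_self_nonneg⟩

lemma norm_sq_le_of_dense {D : Set H} (hD : Dense D) {h : H} {A : ℝ}
    (hA : ∀ m ∈ D, 2 * ⟪h, m⟫ ≤ A + ‖m‖ ^ 2) : ‖h‖ ^ 2 ≤ A := by
  have hclosed : IsClosed {m | 2 * ⟪h, m⟫ ≤ A + ‖m‖ ^ 2} :=
    isClosed_le (by fun_prop) (by fun_prop)
  have hh : 2 * ⟪h, h⟫ ≤ A + ‖h‖ ^ 2 := closure_minimal hA hclosed (hD h)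
  rw [real_inner_self_eq_norm_sq] at hh
  linarith

/-- Rescaling `v` turns the hypothesis into `|L v| ≤ √C * ‖T v‖`, so `L` descends to a bounded
functional on `range T`; extend it by Hahn–Banach and represent it by Riesz. -/
lemma exists_inner_eq_of_two_mul_le [CompleteSpace H] {V : Type*} [AddCommGroup V] [Module ℝ V]
    (T : V →ₗ[ℝ] H) (L : V →ₗ[ℝ] ℝ) (C : ℝ) (hL : ∀ v, 2 * L v ≤ C + ‖T v‖ ^ 2) :
    ∃ a : H, ∀ v, ⟪a, T v⟫ = L v := by
  have hC : 0 ≤ C := by simpa using hL 0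
  have hsq (v : V) : L v ^ 2 ≤ C * ‖T v‖ ^ 2 := by
    have h := discrim_le_zero (a := ‖T v‖ ^ 2) (b := -2 * L v) (c := C) fun t => by
      have := hL (t • v)
      rw [map_smul, map_smul, norm_smul, mul_pow, Real.norm_eq_abs, sq_abs, smul_eq_mul] at this
      linarith
    rw [discrim] at h
    linarith
  have hker : LinearMap.ker T ≤ LinearMap.ker L := fun v hv => by
    have := hsq v
    rw [LinearMap.mem_ker.mp hv, norm_zero] at this
    exact LinearMap.mem_ker.mpr (pow_eq_zero_iff two_ne_zero |>.mp (by nlinarith [sq_nonneg (L v)]))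
  let g : LinearMap.range T →ₗ[ℝ] ℝ :=
    (LinearMap.ker T).liftQ L hker ∘ₗ T.quotKerEquivRange.symm.toLinearMap
  have hg (v : V) : g ⟨T v, LinearMap.mem_range_self T v⟩ = L v := by
    simp [g, LinearMap.quotKerEquivRange_symm_apply_image]
  have hbound (m : LinearMap.range T) : ‖g m‖ ≤ √C * ‖m‖ := by
    obtain ⟨_, v, rfl⟩ := m
    calc ‖g ⟨T v, _⟩‖ = √(L v ^ 2) := by rw [hg, Real.sqrt_sq_eq_abs, Real.norm_eq_abs]
      _ ≤ √(C * ‖T v‖ ^ 2) := Real.sqrt_le_sqrt (hsq v)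
      _ = √C * ‖T v‖ := by rw [Real.sqrt_mul hC, Real.sqrt_sq (norm_nonneg _)]
  obtain ⟨ℓ, hℓ, -⟩ := exists_extension_norm_eq (LinearMap.range T) (g.mkContinuous √C hbound)
  refine ⟨(InnerProductSpace.toDual ℝ H).symm ℓ, fun v => ?_⟩
  rw [InnerProductSpace.toDual_symm_apply]
  exact (hℓ ⟨T v, LinearMap.mem_range_self T v⟩).trans (hg v)

end Hilbert

structure IsRealization {S H : Type*} [NormedAddCommGroup H] [InnerProductSpace ℝ H]
    (K : S → S → ℝ) (φ : S → H) : Prop where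
  inner_eq : ∀ s t, ⟪φ s, φ t⟫ = K s t
  dense_span : Dense (Submodule.span ℝ (Set.range φ) : Set H)

namespace IsRealization

variable {H : Type*} [NormedAddCommGroup H] [InnerProductSpace ℝ H]

section

variable {S Y : Type*} {φ : S → H}

lemma eq_of_inner_eq {Kₛ : S → S → ℝ} (hφ : IsRealization Kₛ φ) {a b : H}
    (h : ∀ s, ⟪a, φ s⟫ = ⟪b, φ s⟫) : a = b := by
  refine hφ.dense_span.eq_of_inner_left ℝ fun m hm => ?_
  induction hm using Submodule.span_induction with
  | mem _ hm => obtain ⟨s, rfl⟩ := hm; exact h s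
  | zero => simp only [inner_zero_right]
  | add _ _ _ _ h₁ h₂ => rw [inner_add_right, inner_add_right, h₁, h₂]
  | smul r _ _ h => rw [real_inner_smul_right, real_inner_smul_right, h]

variable {K : Y → Y → ℝ} {j : S → Y}

lemma two_mul_sum_le (hK : IsKernel K) (hφ : IsRealization (fun s t => K (j s) (j t)) φ)
    {ι : Type*} [Fintype ι] (α : ι → ℝ) (x : ι → Y) (c : S →₀ ℝ) :
    2 * ∑ i, α i * Finsupp.linearCombination ℝ (fun s => K (x i) (j s)) c ≤
      ∑ i, ∑ k, α i * α k * K (x i) (x k) + ‖Finsupp.linearCombination ℝ φ c‖ ^ 2 := by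
  have hL (y : Y) : Finsupp.linearCombination ℝ (fun s => K y (j s)) c =
      ∑ s : c.support, c s * K y (j s) := by
    rw [Finsupp.linearCombination_apply, Finsupp.sum, ← Finset.sum_coe_sort]; rfl
  have hT : ‖Finsupp.linearCombination ℝ φ c‖ ^ 2 =
      ∑ s : c.support, ∑ t : c.support, c s * c t * K (j s) (j t) := by
    rw [← real_inner_self_eq_norm_sq, Finsupp.linearCombination_apply, Finsupp.sum,
      ← Finset.sum_coe_sort, inner_sum_smul_self]
    simp only [hφ.inner_eq]
  have hcross : ∑ i, α i * Finsupp.linearCombination ℝ (fun s => K (x i) (j s)) c =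
      ∑ i, ∑ s : c.support, α i * c s * K (x i) (j s) := by
    simp only [hL, Finset.mul_sum, mul_assoc]
  rw [hcross, hT]
  exact hK.two_mul_sum_le α x (fun s : c.support => c s) (fun s => j s)

lemma exists_unique_inner_eq (hK : IsKernel K) (hφ : IsRealization (fun s t => K (j s) (j t)) φ)
    [CompleteSpace H] : ∃! v : Y → H, ∀ y s, ⟪v y, φ s⟫ = K y (j s) := by
  have hex (y : Y) : ∃ a : H, ∀ s, ⟪a, φ s⟫ = K y (j s) := by
    obtain ⟨a, ha⟩ := exists_inner_eq_of_two_mul_le (Finsupp.linearCombination ℝ φ)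
      (Finsupp.linearCombination ℝ fun s => K y (j s)) (K y y) fun c => by
        simpa using hφ.two_mul_sum_le hK (fun _ : Unit => 1) (fun _ => y) c
    exact ⟨a, fun s => by simpa using ha (Finsupp.single s 1)⟩
  choose v hv using hex
  exact ⟨v, hv, fun v' hv' => funext fun y => hφ.eq_of_inner_eq fun s => by rw [hv', hv]⟩

lemma apply_eq (hφ : IsRealization (fun s t => K (j s) (j t)) φ) {v : Y → H}
    (hv : ∀ y s, ⟪v y, φ s⟫ = K y (j s)) (s : S) : v (j s) = φ s :=
  hφ.eq_of_inner_eq fun t => by rw [hv, hφ.inner_eq]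

lemma isKernel_sub_inner (hK : IsKernel K) (hφ : IsRealization (fun s t => K (j s) (j t)) φ)
    {v : Y → H} (hv : ∀ y s, ⟪v y, φ s⟫ = K y (j s)) :
    IsKernel fun a b => K a b - ⟪v a, v b⟫ := by
  refine ⟨fun a b => by simp only [hK.1 a, real_inner_comm (v a)], fun n α x => ?_⟩
  have hv' (y : Y) (c : S →₀ ℝ) : ⟪v y, Finsupp.linearCombination ℝ φ c⟫ =
      Finsupp.linearCombination ℝ (fun s => K y (j s)) c := by
    simp only [Finsupp.linearCombination_apply, Finsupp.inner_sum, real_inner_smul_right, hv,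
      smul_eq_mul]
  set h := ∑ i, α i • v (x i)
  have hinner (c : S →₀ ℝ) : ⟪h, Finsupp.linearCombination ℝ φ c⟫ =
      ∑ i, α i * Finsupp.linearCombination ℝ (fun s => K (x i) (j s)) c := by
    simp only [h, sum_inner, real_inner_smul_left, hv']
  have hdense : Dense (Set.range (Finsupp.linearCombination ℝ φ)) := by
    rw [← LinearMap.coe_range, Finsupp.range_linearCombination]; exact hφ.dense_span
  have hnorm := norm_sq_le_of_dense hdense (h := h) (A := ∑ i, ∑ k, α i * α k * K (x i) (x k))
    (by rintro _ ⟨c, rfl⟩; rw [hinner]; exact hφ.two_mul_sum_le hK α x c)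
  rw [← real_inner_self_eq_norm_sq, inner_sum_smul_self] at hnorm
  simp only [mul_sub, Finset.sum_sub_distrib]
  linarith

end

section

variable {X : Type*} {X₁ X₂ : Set X} {KΩ : X → X → ℝ} {φ : ↥(X₁ ∩ X₂) → H}

lemma isCompletion_two_serrated (hφ : IsRealization (fun s t : ↥(X₁ ∩ X₂) => KΩ s t) φ)
    (hcover : X₁ ∪ X₂ = Set.univ) (hpart : IsPartialKernel (X₁ ×ˢ X₁ ∪ X₂ ×ˢ X₂) KΩ)
    {v : X₁ → H} (hv : ∀ (u : X₁) (s : ↥(X₁ ∩ X₂)), ⟪v u, φ s⟫ = KΩ u s)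
    {w : X₂ → H} (hw : ∀ (u : X₂) (s : ↥(X₁ ∩ X₂)), ⟪w u, φ s⟫ = KΩ u s)
    {K : X → X → ℝ} (hΩ : ∀ u z : X, (u, z) ∈ X₁ ×ˢ X₁ ∪ X₂ ×ˢ X₂ → K u z = KΩ u z)
    (h₁₂ : ∀ (u z : X) (h1 : u ∈ X₁) (h2 : z ∈ X₂), u ∉ X₂ → z ∉ X₁ →
      K u z = ⟪v ⟨u, h1⟩, w ⟨z, h2⟩⟫)
    (h₂₁ : ∀ (u z : X) (h2 : u ∈ X₂) (h1 : z ∈ X₁), u ∉ X₁ → z ∉ X₂ →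
      K u z = ⟪v ⟨z, h1⟩, w ⟨u, h2⟩⟫) :
    IsCompletion (X₁ ×ˢ X₁ ∪ X₂ ×ˢ X₂) KΩ K := by
  classical
  have hK₁ : IsKernel fun a b : X₁ => KΩ a b := hpart X₁ Set.subset_union_left
  have hK₂ : IsKernel fun a b : X₂ => KΩ a b := hpart X₂ Set.subset_union_right
  have hmem₂ {a : X} (ha : a ∉ X₁) : a ∈ X₂ := (hcover ▸ Set.mem_univ a).resolve_left ha
  let u : X → H := fun a => if ha : a ∈ X₁ then v ⟨a, ha⟩ else w ⟨a, hmem₂ ha⟩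
  have hcross (a b : X) (ha : a ∈ X₁) (hb : b ∉ X₁) :
      K a b = ⟪u a, u b⟫ ∧ K b a = ⟪u b, u a⟫ := by
    simp only [u, dif_pos ha, dif_neg hb]
    by_cases ha₂ : a ∈ X₂
    · have hvs : v ⟨a, ha⟩ = φ ⟨a, ha, ha₂⟩ :=
        apply_eq (K := fun a b : X₁ => KΩ a b) (j := Set.inclusion Set.inter_subset_left)
          hφ hv ⟨a, ha, ha₂⟩
      rw [hΩ a b (Or.inr ⟨ha₂, hmem₂ hb⟩), hΩ b a (Or.inr ⟨hmem₂ hb, ha₂⟩), hvs,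
        real_inner_comm, hw]
      exact ⟨hK₂.1 ⟨a, ha₂⟩ ⟨b, hmem₂ hb⟩, rfl⟩
    · exact ⟨h₁₂ a b ha _ ha₂ hb, (h₂₁ b a _ ha hb ha₂).trans (real_inner_comm _ _)⟩
  have hD : IsKernel fun a b => K a b - ⟪u a, u b⟫ := by
    refine IsKernel.of_blocks (· ∈ X₁) ?_ ?_ fun a b ha hb =>
      ⟨sub_eq_zero.2 (hcross a b ha hb).1, sub_eq_zero.2 (hcross a b ha hb).2⟩
    · convert isKernel_sub_inner (j := Set.inclusion Set.inter_subset_left) hK₁ hφ hv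
        using 3 with a b
      simp only [u, dif_pos a.2, dif_pos b.2, hΩ a b (Or.inl ⟨a.2, b.2⟩)]
    · convert (isKernel_sub_inner (j := Set.inclusion Set.inter_subset_right) hK₂ hφ hw).comp
        (fun a : {y // y ∉ X₁} => (⟨a, hmem₂ a.2⟩ : X₂)) using 3 with a b
      simp only [u, dif_neg a.2, dif_neg b.2, hΩ a b (Or.inr ⟨hmem₂ a.2, hmem₂ b.2⟩)]
  refine ⟨?_, hΩ⟩
  simpa only [add_sub_cancel] using (isKernel_inner u).add hD

end

end IsRealization

/-- Canonical completion for a 2-serrated domain: with `(H, φ)` a realization of the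
restriction of `KΩ` to `S = X₁ ∩ X₂`, there exist unique maps `v : X₁ → H`, `w : X₂ → H`
with `⟪v x, φ s⟫ = KΩ x s` and `⟪w y, φ s⟫ = KΩ y s`, and the function `K⋆` defined from
them is a completion of `KΩ`. -/
theorem canonical_completion_two_serrated {X H : Type*}
    [NormedAddCommGroup H] [InnerProductSpace ℝ H] [CompleteSpace H]
    (X₁ X₂ : Set X) (hcover : X₁ ∪ X₂ = Set.univ)
    (KΩ : X → X → ℝ)
    (hpart : IsPartialKernel (X₁ ×ˢ X₁ ∪ X₂ ×ˢ X₂) KΩ)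
    (φ : ↥(X₁ ∩ X₂) → H)
    (hφ : ∀ s t : ↥(X₁ ∩ X₂), ⟪φ s, φ t⟫ = KΩ s t)
    (hd : Dense (Submodule.span ℝ (Set.range φ) : Set H)) :
    (∃! v : X₁ → H, ∀ (u : X₁) (s : ↥(X₁ ∩ X₂)), ⟪v u, φ s⟫ = KΩ u s) ∧
    (∃! w : X₂ → H, ∀ (u : X₂) (s : ↥(X₁ ∩ X₂)), ⟪w u, φ s⟫ = KΩ u s) ∧
    (∀ (v : X₁ → H) (w : X₂ → H),
      (∀ (u : X₁) (s : ↥(X₁ ∩ X₂)), ⟪v u, φ s⟫ = KΩ u s) →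
      (∀ (u : X₂) (s : ↥(X₁ ∩ X₂)), ⟪w u, φ s⟫ = KΩ u s) →
      ∀ K : X → X → ℝ,
        (∀ u z : X, (u, z) ∈ X₁ ×ˢ X₁ ∪ X₂ ×ˢ X₂ → K u z = KΩ u z) →
        (∀ (u z : X) (h1 : u ∈ X₁) (h2 : z ∈ X₂), u ∉ X₂ → z ∉ X₁ →
          K u z = ⟪v ⟨u, h1⟩, w ⟨z, h2⟩⟫) →
        (∀ (u z : X) (h2 : u ∈ X₂) (h1 : z ∈ X₁), u ∉ X₁ → z ∉ X₂ →
          K u z = ⟪v ⟨z, h1⟩, w ⟨u, h2⟩⟫) →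
        IsCompletion (X₁ ×ˢ X₁ ∪ X₂ ×ˢ X₂) KΩ K) := by
  have hreal : IsRealization (fun s t : ↥(X₁ ∩ X₂) => KΩ s t) φ := ⟨hφ, hd⟩
  refine ⟨?_, ?_, fun v w hv hw K hΩ h₁₂ h₂₁ =>
    hreal.isCompletion_two_serrated hcover hpart hv hw hΩ h₁₂ h₂₁⟩
  · exact hreal.exists_unique_inner_eq (j := Set.inclusion Set.inter_subset_left)
      (hpart X₁ Set.subset_union_left)
  · exact hreal.exists_unique_inner_eq (j := Set.inclusion Set.inter_subset_right)
      (hpart X₂ Set.subset_union_right)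
end

section
/- Let X = X₁ ∪ X₂ with S = X₁ ∩ X₂, let K be a reproducing kernel on X, and let (H, φ) be a realization of K; for A ⊆ X let Π_A denote the orthogonal projection of H onto the closed linear span of {φ x : x ∈ A}. Then the following are equivalent: (1) K(x,y) = ⟪Π_S(φ x), Π_S(φ y)⟫ for all x ∈ X₁ and y ∈ X₂; (2) Id_H − Π_{X₁} − Π_{X₂} + Π_S = 0; (3) Π_S = Π_{X₁} ∘ Π_{X₂} = Π_{X₂} ∘ Π_{X₁}. (Condition (1) says K is the canonical completion of its restriction to (X₁ × X₁) ∪ (X₂ × X₂).) -/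
/-!
Write `Π₁, Π₂, Π_S` for the three projections. As `Π₁` is idempotent and `Π₁ Π_S = Π_S`, the
identity `Id − Π₁ − Π₂ + Π_S = 0` gives `Π₁ Π₂ = Π₁ − Π₁² + Π₁ Π_S = Π_S`, and symmetrically
`Π₂ Π₁ = Π_S`. Conversely `Π_S = Π₁ Π₂` gives
`K(x, y) = ⟪Π₁ φ x, Π₂ φ y⟫ = ⟪φ x, Π_S φ y⟫ = ⟪Π_S φ x, Π_S φ y⟫`. Finally, for `x ∈ X₁` the
completion identity makes `φ x − Π_S φ x` orthogonal to every `φ y` with `y ∈ X₂`, so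
`Π₂ φ x = Π_S φ x` and `Id − Π₁ − Π₂ + Π_S` kills `φ x`; likewise for `x ∈ X₂`, and the `φ x`
span a dense subspace.
-/

open scoped RealInnerProductSpace

/-- The orthogonal projection of `H` onto the closed linear span of `{φ x : x ∈ A}`, as a
continuous linear endomorphism of `H`. -/
noncomputable def spanProj {X H : Type*} [NormedAddCommGroup H]
    [InnerProductSpace ℝ H] [CompleteSpace H] (φ : X → H) (A : Set X) :
    H →L[ℝ] H :=
  letI U : Submodule ℝ H := (Submodule.span ℝ (φ '' A)).topologicalClosure
  haveI : CompleteSpace U :=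
    (Submodule.isClosed_topologicalClosure _).completeSpace_coe
  U.subtypeL.comp U.orthogonalProjectionOnto

theorem mul_eq_of_one_sub_sub_add_eq_zero {R : Type*} [Ring R] {p q r : R}
    (hp : IsIdempotentElem p) (hpr : p * r = r) (h : 1 - p - q + r = 0) : p * q = r := by
  have hq : q = 1 - p + r := by
    rw [← sub_eq_zero, ← neg_eq_zero, ← h]
    abel
  rw [hq, mul_add, mul_sub, mul_one, hp.eq, sub_self, zero_add, hpr]

section spanClosure

variable {X H : Type*} [NormedAddCommGroup H] [InnerProductSpace ℝ H] (φ : X → H)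

noncomputable def spanClosure (A : Set X) : Submodule ℝ H :=
  (Submodule.span ℝ (φ '' A)).topologicalClosure

theorem spanClosure_mono {A B : Set X} (h : A ⊆ B) : spanClosure φ A ≤ spanClosure φ B :=
  Submodule.topologicalClosure_mono (Submodule.span_mono (Set.image_mono h))

theorem mem_orthogonal_spanClosure_iff {A : Set X} {v : H} :
    v ∈ (spanClosure φ A)ᗮ ↔ ∀ y ∈ A, ⟪φ y, v⟫ = 0 := by
  rw [spanClosure, Submodule.orthogonal_closure, ← Submodule.span_singleton_le_iff_mem,
    ← Submodule.isOrtho_iff_le, Submodule.isOrtho_span]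
  simp [real_inner_comm]

variable [CompleteSpace H]

-- `spanProj φ A` is definitionally `(spanClosure φ A).starProjection`, so the `starProjection`
-- API applies to it directly.
instance (A : Set X) : CompleteSpace (spanClosure φ A) :=
  (Submodule.isClosed_topologicalClosure _).completeSpace_coe

theorem spanProj_apply_of_mem {A : Set X} {x : X} (hx : x ∈ A) : spanProj φ A (φ x) = φ x :=
  Submodule.starProjection_eq_self_iff.mpr
    (Submodule.le_topologicalClosure _ (Submodule.subset_span ⟨x, hx, rfl⟩))

theorem spanProj_spanProj_apply (A : Set X) (v : H) :
    spanProj φ A (spanProj φ A v) = spanProj φ A v :=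
  Submodule.starProjection_eq_self_iff.mpr (Submodule.starProjection_apply_mem _ v)

theorem isIdempotentElem_spanProj (A : Set X) : IsIdempotentElem (spanProj φ A) :=
  Submodule.isIdempotentElem_starProjection _

theorem spanProj_mul_spanProj_of_subset {A B : Set X} (h : A ⊆ B) :
    spanProj φ B * spanProj φ A = spanProj φ A := by
  ext v
  exact Submodule.starProjection_eq_self_iff.mpr
    (spanClosure_mono φ h (Submodule.starProjection_apply_mem _ v))

theorem inner_spanProj_left (A : Set X) (v w : H) :
    ⟪spanProj φ A v, w⟫ = ⟪v, spanProj φ A w⟫ :=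
  Submodule.inner_starProjection_left_eq_right _ v w

theorem inner_spanProj_spanProj (A : Set X) (v w : H) :
    ⟪spanProj φ A v, spanProj φ A w⟫ = ⟪v, spanProj φ A w⟫ := by
  rw [inner_spanProj_left, spanProj_spanProj_apply]

theorem spanProj_apply_eq_of_inner_eq {B C : Set X} (hCB : C ⊆ B) {x : X}
    (h : ∀ y ∈ B, ⟪φ x, φ y⟫ = ⟪spanProj φ C (φ x), spanProj φ C (φ y)⟫) :
    spanProj φ B (φ x) = spanProj φ C (φ x) := by
  refine Submodule.eq_starProjection_of_mem_orthogonal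
    (spanClosure_mono φ hCB (Submodule.starProjection_apply_mem _ _)) ?_
  refine (mem_orthogonal_spanClosure_iff φ).mpr fun y hy => ?_
  rw [inner_sub_right, real_inner_comm (φ x), h y hy, real_inner_comm (spanProj φ C (φ x)),
    inner_spanProj_spanProj, inner_spanProj_left, sub_self]

theorem id_sub_spanProj_sub_spanProj_add_spanProj_inter_eq_zero {X₁ X₂ : Set X}
    (hcover : X₁ ∪ X₂ = Set.univ) (hd : Dense (Submodule.span ℝ (Set.range φ) : Set H))
    (h : ∀ x y : X, x ∈ X₁ → y ∈ X₂ →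
      ⟪φ x, φ y⟫ = ⟪spanProj φ (X₁ ∩ X₂) (φ x), spanProj φ (X₁ ∩ X₂) (φ y)⟫) :
    ContinuousLinearMap.id ℝ H - spanProj φ X₁ - spanProj φ X₂ + spanProj φ (X₁ ∩ X₂) = 0 := by
  refine ContinuousLinearMap.ext_on hd ?_
  rintro _ ⟨x, rfl⟩
  rcases (hcover ▸ Set.mem_univ x : x ∈ X₁ ∪ X₂) with hx | hx
  · have h₂ : spanProj φ X₂ (φ x) = spanProj φ (X₁ ∩ X₂) (φ x) :=
      spanProj_apply_eq_of_inner_eq φ Set.inter_subset_right (h x · hx)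
    simp [h₂, spanProj_apply_of_mem φ hx]
  · have h₁ : spanProj φ X₁ (φ x) = spanProj φ (X₁ ∩ X₂) (φ x) :=
      spanProj_apply_eq_of_inner_eq φ Set.inter_subset_left fun y hy => by
        rw [real_inner_comm, h y x hy hx, real_inner_comm]
    simp [h₁, spanProj_apply_of_mem φ hx]

theorem spanProj_eq_comp_of_id_sub_sub_add_eq_zero {A B C : Set X} (hCA : C ⊆ A)
    (h : ContinuousLinearMap.id ℝ H - spanProj φ A - spanProj φ B + spanProj φ C = 0) :
    spanProj φ C = (spanProj φ A).comp (spanProj φ B) :=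
  (mul_eq_of_one_sub_sub_add_eq_zero (isIdempotentElem_spanProj φ A)
    (spanProj_mul_spanProj_of_subset φ hCA) h).symm

theorem inner_eq_inner_spanProj_of_eq_comp {A B C : Set X}
    (h : spanProj φ C = (spanProj φ A).comp (spanProj φ B)) {x y : X} (hx : x ∈ A) (hy : y ∈ B) :
    ⟪φ x, φ y⟫ = ⟪spanProj φ C (φ x), spanProj φ C (φ y)⟫ :=
  calc ⟪φ x, φ y⟫ = ⟪spanProj φ A (φ x), spanProj φ B (φ y)⟫ := by
        rw [spanProj_apply_of_mem φ hx, spanProj_apply_of_mem φ hy]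
    _ = ⟪φ x, spanProj φ C (φ y)⟫ := by rw [inner_spanProj_left, h]; rfl
    _ = ⟪spanProj φ C (φ x), spanProj φ C (φ y)⟫ := (inner_spanProj_spanProj φ C _ _).symm

end spanClosure

theorem canonical_completion_projection_characterization_general {X H : Type*}
    [NormedAddCommGroup H] [InnerProductSpace ℝ H] [CompleteSpace H]
    (X₁ X₂ : Set X) (hcover : X₁ ∪ X₂ = Set.univ)
    (K : X → X → ℝ)
    (φ : X → H) (hφ : ∀ s t, ⟪φ s, φ t⟫ = K s t)
    (hd : Dense (Submodule.span ℝ (Set.range φ) : Set H)) :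
    ((∀ x y : X, x ∈ X₁ → y ∈ X₂ →
        K x y = ⟪spanProj φ (X₁ ∩ X₂) (φ x), spanProj φ (X₁ ∩ X₂) (φ y)⟫) ↔
      (ContinuousLinearMap.id ℝ H - spanProj φ X₁ - spanProj φ X₂ +
        spanProj φ (X₁ ∩ X₂) = 0)) ∧
    ((ContinuousLinearMap.id ℝ H - spanProj φ X₁ - spanProj φ X₂ +
        spanProj φ (X₁ ∩ X₂) = 0) ↔
      (spanProj φ (X₁ ∩ X₂) = (spanProj φ X₁).comp (spanProj φ X₂) ∧
       spanProj φ (X₁ ∩ X₂) = (spanProj φ X₂).comp (spanProj φ X₁))) := by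
  simp only [← hφ]
  have completion_imp_sum := id_sub_spanProj_sub_spanProj_add_spanProj_inter_eq_zero φ hcover hd
  have sum_imp_comp₁₂ := spanProj_eq_comp_of_id_sub_sub_add_eq_zero φ (B := X₂)
    (Set.inter_subset_left : X₁ ∩ X₂ ⊆ X₁)
  have sum_imp_comp₂₁ := spanProj_eq_comp_of_id_sub_sub_add_eq_zero φ (B := X₁)
    (Set.inter_subset_right : X₁ ∩ X₂ ⊆ X₂)
  rw [sub_right_comm] at sum_imp_comp₂₁
  have comp_imp_completion := fun h x y (hx : x ∈ X₁) (hy : y ∈ X₂) =>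
    inner_eq_inner_spanProj_of_eq_comp φ (C := X₁ ∩ X₂) h hx hy
  exact ⟨⟨completion_imp_sum, fun h => comp_imp_completion (sum_imp_comp₁₂ h)⟩,
    ⟨fun h => ⟨sum_imp_comp₁₂ h, sum_imp_comp₂₁ h⟩,
      fun h => completion_imp_sum (comp_imp_completion h.1)⟩⟩

/-- For `X = X₁ ∪ X₂` and `S = X₁ ∩ X₂`, the following are equivalent:
(1) `K(x,y) = ⟪Π_S (φ x), Π_S (φ y)⟫` for `x ∈ X₁`, `y ∈ X₂` (canonical completion);
(2) `Id − Π_{X₁} − Π_{X₂} + Π_S = 0`;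
(3) `Π_S = Π_{X₁} Π_{X₂} = Π_{X₂} Π_{X₁}`. -/
theorem canonical_completion_projection_characterization {X H : Type*}
    [NormedAddCommGroup H] [InnerProductSpace ℝ H] [CompleteSpace H]
    (X₁ X₂ : Set X) (hcover : X₁ ∪ X₂ = Set.univ)
    (K : X → X → ℝ) (hK : IsKernel K)
    (φ : X → H) (hφ : ∀ s t, ⟪φ s, φ t⟫ = K s t)
    (hd : Dense (Submodule.span ℝ (Set.range φ) : Set H)) :
    ((∀ x y : X, x ∈ X₁ → y ∈ X₂ →
        K x y = ⟪spanProj φ (X₁ ∩ X₂) (φ x), spanProj φ (X₁ ∩ X₂) (φ y)⟫) ↔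
      (ContinuousLinearMap.id ℝ H - spanProj φ X₁ - spanProj φ X₂ +
        spanProj φ (X₁ ∩ X₂) = 0)) ∧
    ((ContinuousLinearMap.id ℝ H - spanProj φ X₁ - spanProj φ X₂ +
        spanProj φ (X₁ ∩ X₂) = 0) ↔
      (spanProj φ (X₁ ∩ X₂) = (spanProj φ X₁).comp (spanProj φ X₂) ∧
       spanProj φ (X₁ ∩ X₂) = (spanProj φ X₂).comp (spanProj φ X₁))) :=
  canonical_completion_projection_characterization_general X₁ X₂ hcover K φ hφ hd
end

section
/- Let K be a reproducing kernel on a set X with realization (H, φ). Then: (i) for every n ≥ 1, all α₁,…,α_n ∈ ℝ and all x₁,…,x_n ∈ X, (1/2) ∑_{i,j=1}^n α_i α_j K(x_i, x_j) = sup_{v ∈ H} ( ∑_{i=1}^n α_i ⟪v, φ x_i⟫ − (1/2) ‖v‖² ), and the supremum is attained at v = ∑_{i=1}^n α_i φ x_i; (ii) for every v ∈ H, (1/2) ‖v‖² = sup over all n ≥ 1, α₁,…,α_n ∈ ℝ, x₁,…,x_n ∈ X of ( ∑_{i=1}^n α_i ⟪v, φ x_i⟫ − (1/2) ∑_{i,j=1}^n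 α_i α_j K(x_i, x_j) ). -/
/-!
Writing `w = ∑ αᵢ • φ xᵢ`, the expressions in (i) and (ii) become `⟪v, w⟫ - ½‖v‖²` and
`⟪v, w⟫ - ½‖w‖²`, since the kernel's quadratic form is `‖w‖²`. Both are at most `½‖w‖²`,
resp. `½‖v‖²`, because `0 ≤ ½‖v - w‖²`, with equality at `v = w`. In (ii) `w` ranges over the
dense span of `φ`, and continuity of `w ↦ ⟪v, w⟫ - ½‖w‖²` makes `½‖v‖²` the supremum.
-/

open scoped RealInnerProductSpace

theorem Submodule.mem_span_range_iff_exists_fin {R M α : Type*} [Semiring R] [AddCommMonoid M]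
    [Module R M] {v : α → M} {m : M} :
    m ∈ span R (Set.range v) ↔
      ∃ (n : ℕ) (c : Fin n → R) (x : Fin n → α), ∑ i, c i • v (x i) = m := by
  rw [mem_span_set']
  constructor
  · rintro ⟨n, c, g, rfl⟩
    choose x hx using fun i => (g i).2
    exact ⟨n, c, x, by simp only [hx]⟩
  · rintro ⟨n, c, x, rfl⟩
    exact ⟨n, c, fun i => ⟨v (x i), x i, rfl⟩, rfl⟩

section InnerProductSpace

variable {E ι : Type*} [NormedAddCommGroup E] [InnerProductSpace ℝ E] [Fintype ι]

theorem sum_mul_inner_eq_inner_sum_smul (v : E) (α : ι → ℝ) (f : ι → E) :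
    ∑ i, α i * ⟪v, f i⟫ = ⟪v, ∑ i, α i • f i⟫ := by
  simp only [inner_sum, real_inner_smul_right]

theorem norm_sum_smul_sq (α : ι → ℝ) (f : ι → E) :
    ‖∑ i, α i • f i‖ ^ 2 = ∑ i, ∑ j, α i * α j * ⟪f i, f j⟫ := by
  rw [← real_inner_self_eq_norm_sq, sum_inner]
  simp only [real_inner_smul_left, inner_sum, real_inner_smul_right]
  exact Finset.sum_congr rfl fun i _ => Finset.sum_congr rfl fun j _ => by ring

theorem real_inner_le_half_norm_sq_add_half_norm_sq (v w : E) :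
    ⟪v, w⟫ ≤ 1 / 2 * ‖v‖ ^ 2 + 1 / 2 * ‖w‖ ^ 2 := by
  nlinarith [sq_nonneg ‖v - w‖, norm_sub_sq_real v w]

theorem isLUB_image_inner_sub_half_norm_sq {s : Set E} (hs : Dense s) (v : E) :
    IsLUB ((fun w => ⟪v, w⟫ - 1 / 2 * ‖w‖ ^ 2) '' s) (1 / 2 * ‖v‖ ^ 2) := by
  refine isLUB_of_mem_closure ?_ ?_
  · rintro _ ⟨w, -, rfl⟩
    linarith [real_inner_le_half_norm_sq_add_half_norm_sq v w]
  · have hcont : Continuous fun w : E => ⟪v, w⟫ - 1 / 2 * ‖w‖ ^ 2 := by fun_prop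
    convert mem_closure_image hcont.continuousAt (hs v) using 1
    rw [real_inner_self_eq_norm_sq]
    ring

end InnerProductSpace

theorem kernel_norm_duality_general {X H : Type*}
    [NormedAddCommGroup H] [InnerProductSpace ℝ H]
    (K : X → X → ℝ)
    (φ : X → H) (hφ : ∀ s t, ⟪φ s, φ t⟫ = K s t)
    (hd : Dense (Submodule.span ℝ (Set.range φ) : Set H)) :
    (∀ (n : ℕ) (α : Fin n → ℝ) (x : Fin n → X),
      (∀ v : H, (∑ i, α i * ⟪v, φ (x i)⟫) - (1 / 2) * ‖v‖ ^ 2 ≤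
          (1 / 2) * ∑ i, ∑ j, α i * α j * K (x i) (x j)) ∧
      ((∑ i, α i * ⟪∑ j, α j • φ (x j), φ (x i)⟫) -
          (1 / 2) * ‖∑ j, α j • φ (x j)‖ ^ 2 =
          (1 / 2) * ∑ i, ∑ j, α i * α j * K (x i) (x j))) ∧
    (∀ v : H, (1 / 2) * ‖v‖ ^ 2 =
      sSup {r : ℝ | ∃ (n : ℕ) (α : Fin n → ℝ) (x : Fin n → X),
        r = (∑ i, α i * ⟪v, φ (x i)⟫) -
          (1 / 2) * ∑ i, ∑ j, α i * α j * K (x i) (x j)}) := by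
  obtain rfl : K = fun s t => ⟪φ s, φ t⟫ := funext₂ fun s t => (hφ s t).symm
  simp only [← norm_sum_smul_sq]
  simp only [sum_mul_inner_eq_inner_sum_smul]
  refine ⟨fun n α x => ⟨fun v => ?_, ?_⟩, fun v => ?_⟩
  · linarith [real_inner_le_half_norm_sq_add_half_norm_sq v (∑ j, α j • φ (x j))]
  · rw [real_inner_self_eq_norm_sq]
    ring
  · have hset : {r : ℝ | ∃ (n : ℕ) (α : Fin n → ℝ) (x : Fin n → X),
        r = ⟪v, ∑ i, α i • φ (x i)⟫ - 1 / 2 * ‖∑ i, α i • φ (x i)‖ ^ 2} =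
        (fun w => ⟪v, w⟫ - 1 / 2 * ‖w‖ ^ 2) '' Submodule.span ℝ (Set.range φ) := by
      ext r
      simp only [Set.mem_image, SetLike.mem_coe, Submodule.mem_span_range_iff_exists_fin]
      constructor
      · rintro ⟨n, α, x, rfl⟩
        exact ⟨_, ⟨n, α, x, rfl⟩, rfl⟩
      · rintro ⟨_, ⟨n, α, x, rfl⟩, rfl⟩
        exact ⟨n, α, x, rfl⟩
    rw [hset, (isLUB_image_inner_sub_half_norm_sq hd v).csSup_eq
      ⟨_, 0, Submodule.zero_mem _, rfl⟩]

/-- Duality relations: the quadratic form of a reproducing kernel and (half) the squared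
RKHS norm are convex conjugates of each other.  Part (i): the quadratic form is the supremum
(attained at `v = ∑ α_i • φ (x i)`); part (ii): the squared norm is the supremum of the dual
expressions. -/
theorem kernel_norm_duality {X H : Type*}
    [NormedAddCommGroup H] [InnerProductSpace ℝ H] [CompleteSpace H]
    (K : X → X → ℝ) (hK : IsKernel K)
    (φ : X → H) (hφ : ∀ s t, ⟪φ s, φ t⟫ = K s t)
    (hd : Dense (Submodule.span ℝ (Set.range φ) : Set H)) :
    (∀ (n : ℕ) (α : Fin n → ℝ) (x : Fin n → X),
      (∀ v : H, (∑ i, α i * ⟪v, φ (x i)⟫) - (1 / 2) * ‖v‖ ^ 2 ≤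
          (1 / 2) * ∑ i, ∑ j, α i * α j * K (x i) (x j)) ∧
      ((∑ i, α i * ⟪∑ j, α j • φ (x j), φ (x i)⟫) -
          (1 / 2) * ‖∑ j, α j • φ (x j)‖ ^ 2 =
          (1 / 2) * ∑ i, ∑ j, α i * α j * K (x i) (x j))) ∧
    (∀ v : H, (1 / 2) * ‖v‖ ^ 2 =
      sSup {r : ℝ | ∃ (n : ℕ) (α : Fin n → ℝ) (x : Fin n → X),
        r = (∑ i, α i * ⟪v, φ (x i)⟫) -
          (1 / 2) * ∑ i, ∑ j, α i * α j * K (x i) (x j)}) :=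
  kernel_norm_duality_general K φ hφ hd
end

section
/- Let a > 0, let F : ℝ → ℝ be continuous and positive-definite on [−a, a], let H be a real Hilbert space and k : [0, a] → H a map with ⟪k u, k v⟫ = F(u − v) for all u, v ∈ [0, a] and with the linear span of {k u : u ∈ [0,a]} dense in H. Suppose (Φ_t)_{t ≥ 0} is a family of continuous linear operators on H with Φ_0 = Id_H, Φ_s ∘ Φ_t = Φ_{s+t} for all s, t ≥ 0, ‖Φ_t‖ ≤ 1 for all t ≥ 0, t ↦ Φ_t(g) continuous for every g ∈ H, and Φ_t(k u) = k(u − t) whenever 0 ≤ t ≤ u ≤ a. Then the function F̃ : ℝ → ℝ defined by F̃(t) = ⟪k 0, Φ_{|t|}(k 0)⟫ is positive-definite on ℝ and satisfies F̃(t) = F(t) for all t ∈ [−a, a]. -/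
/-!
Peeling off the leftmost point `x_a` and factoring `Φ_{x_a - c}` out of the other terms by the
semigroup law, contractivity shows by induction that the quadratic form
`∑ α_i α_j ⟪v, Φ_{|x_i - x_j|} v⟫` dominates `‖∑ α_j Φ_{x_j - c} v‖² ≥ 0` for every lower bound
`c` of the points.

For `0 ≤ s ≤ a` the contraction `Φ_s` sends `k s` to `k 0`, a vector of the same norm, and a
contraction preserves the inner products of a vector whose norm it preserves; hence
`⟪k 0, Φ_s (k 0)⟫ = ⟪k s, k 0⟫ = F s`.
-/

open scoped RealInnerProductSpace

open Finset Set

section Contraction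

variable {E G : Type*} [NormedAddCommGroup E] [InnerProductSpace ℝ E]
  [NormedAddCommGroup G] [InnerProductSpace ℝ G]

theorem ContinuousLinearMap.norm_map_le_of_opNorm_le_one {T : E →L[ℝ] G} (hT : ‖T‖ ≤ 1)
    (x : E) : ‖T x‖ ≤ ‖x‖ := by
  simpa using T.le_of_opNorm_le hT x

/-- Expanding `‖T (x + r • y)‖² ≤ ‖x + r • y‖²` gives a quadratic in `r` with no constant term,
so its linear coefficient must vanish. -/
theorem ContinuousLinearMap.inner_map_map_of_norm_map_eq {T : E →L[ℝ] G} (hT : ‖T‖ ≤ 1)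
    {x : E} (hx : ‖T x‖ = ‖x‖) (y : E) : ⟪T x, T y⟫ = ⟪x, y⟫ := by
  have hquad : ∀ r : ℝ,
      0 ≤ (‖y‖ ^ 2 - ‖T y‖ ^ 2) * (r * r) + 2 * (⟪x, y⟫ - ⟪T x, T y⟫) * r + 0 := by
    intro r
    have h := pow_le_pow_left₀ (norm_nonneg _) (T.norm_map_le_of_opNorm_le_one hT (x + r • y)) 2
    rw [map_add, map_smul, norm_add_sq_real, norm_add_sq_real, norm_smul, norm_smul,
      inner_smul_right, inner_smul_right, hx, Real.norm_eq_abs, mul_pow, mul_pow, sq_abs] at h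
    nlinarith
  have hdiscr := discrim_le_zero hquad
  rw [discrim] at hdiscr
  nlinarith [sq_nonneg (⟪x, y⟫ - ⟪T x, T y⟫)]

end Contraction

section ContractionSemigroup

variable {E : Type*} [NormedAddCommGroup E] [InnerProductSpace ℝ E] {Φ : ℝ → E →L[ℝ] E}
  (hΦcomp : ∀ s t : ℝ, 0 ≤ s → 0 ≤ t → (Φ s).comp (Φ t) = Φ (s + t))
  (hΦnorm : ∀ t : ℝ, 0 ≤ t → ‖Φ t‖ ≤ 1) {v : E} (hv : Φ 0 v = v)
include hΦcomp hΦnorm hv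

theorem norm_sum_smul_apply_sq_le {ι : Type*} [DecidableEq ι] (x α : ι → ℝ) (s : Finset ι)
    {c : ℝ} (hc : ∀ i ∈ s, c ≤ x i) :
      ‖∑ j ∈ s, α j • Φ (x j - c) v‖ ^ 2 ≤
        ∑ i ∈ s, ∑ j ∈ s, α i * α j * ⟪v, Φ |x i - x j| v⟫ := by
  induction s using Finset.induction_on_min_value x generalizing c with
  | empty => simp
  | insert a s has hmin ih =>
    have hac : 0 ≤ x a - c := sub_nonneg.2 (hc a (mem_insert_self a s))
    set w := ∑ j ∈ s, α j • Φ (x j - x a) v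
    have hw : ‖w‖ ^ 2 ≤ ∑ i ∈ s, ∑ j ∈ s, α i * α j * ⟪v, Φ |x i - x j| v⟫ := ih hmin
    have hrow : ∑ j ∈ s, α a * α j * ⟪v, Φ |x a - x j| v⟫ = α a * ⟪v, w⟫ := by
      simp only [w, inner_sum, inner_smul_right, mul_sum]
      refine sum_congr rfl fun j hj => ?_
      rw [abs_sub_comm, abs_of_nonneg (sub_nonneg.2 (hmin j hj))]
      ring
    have hcol : ∑ i ∈ s, α i * α a * ⟪v, Φ |x i - x a| v⟫ = α a * ⟪v, w⟫ := by
      rw [← hrow]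
      exact sum_congr rfl fun j _ => by rw [abs_sub_comm]; ring
    have hpush : ∑ j ∈ insert a s, α j • Φ (x j - c) v = Φ (x a - c) (α a • v + w) := by
      rw [sum_insert has, map_add, map_smul, map_sum]
      congr 1
      refine sum_congr rfl fun j hj => ?_
      rw [map_smul, ← ContinuousLinearMap.comp_apply, hΦcomp _ _ hac (sub_nonneg.2 (hmin j hj)),
        sub_add_sub_cancel']
    calc ‖∑ j ∈ insert a s, α j • Φ (x j - c) v‖ ^ 2 = ‖Φ (x a - c) (α a • v + w)‖ ^ 2 := by
          rw [hpush]
      _ ≤ ‖α a • v + w‖ ^ 2 := by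
          gcongr
          exact (Φ _).norm_map_le_of_opNorm_le_one (hΦnorm _ hac) _
      _ ≤ ∑ i ∈ insert a s, ∑ j ∈ insert a s, α i * α j * ⟪v, Φ |x i - x j| v⟫ := by
          simp only [sum_insert has, sum_add_distrib, sub_self, abs_zero, hv, hrow, hcol,
            norm_add_sq_real, real_inner_smul_left, norm_smul, Real.norm_eq_abs, mul_pow, sq_abs,
            real_inner_self_eq_norm_sq]
          linarith

theorem isPosDefOn_univ_inner_apply_abs : IsPosDefOn univ (fun t => ⟪v, Φ |t| v⟫) := by
  intro n x α _
  obtain ⟨c, hc⟩ := (Set.finite_range x).bddBelow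
  exact (sq_nonneg _).trans
    (norm_sum_smul_apply_sq_le hΦcomp hΦnorm hv x α univ fun i _ => hc (mem_range_self i))

end ContractionSemigroup

theorem inner_apply_eq_of_shift {E : Type*} [NormedAddCommGroup E] [InnerProductSpace ℝ E]
    {a : ℝ} {F : ℝ → ℝ} {k : ℝ → E} {Φ : ℝ → E →L[ℝ] E}
    (hk : ∀ u ∈ Icc (0 : ℝ) a, ∀ v ∈ Icc (0 : ℝ) a, ⟪k u, k v⟫ = F (u - v))
    (hΦnorm : ∀ t : ℝ, 0 ≤ t → ‖Φ t‖ ≤ 1)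
    (hshift : ∀ t u : ℝ, 0 ≤ t → t ≤ u → u ≤ a → Φ t (k u) = k (u - t))
    {s : ℝ} (hs : s ∈ Icc 0 a) : ⟪k 0, Φ s (k 0)⟫ = F s := by
  have h0 : (0 : ℝ) ∈ Icc 0 a := ⟨le_rfl, hs.1.trans hs.2⟩
  have hks : Φ s (k s) = k 0 := by simpa using hshift s s hs.1 le_rfl hs.2
  have hnorm : ‖Φ s (k s)‖ = ‖k s‖ := by
    rw [hks, ← sq_eq_sq₀ (norm_nonneg _) (norm_nonneg _), ← real_inner_self_eq_norm_sq,
      ← real_inner_self_eq_norm_sq, hk 0 h0 0 h0, hk s hs s hs, sub_self, sub_self]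
  have hinner := (Φ s).inner_map_map_of_norm_map_eq (hΦnorm s hs.1) hnorm (k 0)
  rw [hks] at hinner
  rw [hinner, hk s hs 0 h0, sub_zero]

theorem semigroup_gives_canonical_extension_general {H : Type*}
    [NormedAddCommGroup H] [InnerProductSpace ℝ H]
    (a : ℝ) (F : ℝ → ℝ)
    (k : ℝ → H)
    (hk : ∀ u ∈ Set.Icc (0 : ℝ) a, ∀ v ∈ Set.Icc (0 : ℝ) a, ⟪k u, k v⟫ = F (u - v))
    (Φ : ℝ → H →L[ℝ] H)
    (hΦ0 : Φ 0 = ContinuousLinearMap.id ℝ H)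
    (hΦcomp : ∀ s t : ℝ, 0 ≤ s → 0 ≤ t → (Φ s).comp (Φ t) = Φ (s + t))
    (hΦnorm : ∀ t : ℝ, 0 ≤ t → ‖Φ t‖ ≤ 1)
    (hshift : ∀ t u : ℝ, 0 ≤ t → t ≤ u → u ≤ a → Φ t (k u) = k (u - t)) :
    IsPosDefOn Set.univ (fun t => ⟪k 0, Φ |t| (k 0)⟫) ∧
      ∀ t ∈ Set.Icc (-a) a, ⟪k 0, Φ |t| (k 0)⟫ = F t := by
  refine ⟨isPosDefOn_univ_inner_apply_abs hΦcomp hΦnorm (by rw [hΦ0]; rfl), fun t ht => ?_⟩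
  rcases le_total 0 t with h | h
  · rw [abs_of_nonneg h]
    exact inner_apply_eq_of_shift hk hΦnorm hshift ⟨h, ht.2⟩
  · have hmt : -t ∈ Icc 0 a := ⟨neg_nonneg.2 h, neg_le.1 ht.1⟩
    have h0 : (0 : ℝ) ∈ Icc 0 a := ⟨le_rfl, hmt.1.trans hmt.2⟩
    calc ⟪k 0, Φ |t| (k 0)⟫ = F (-t - 0) := by
          rw [abs_of_nonpos h, inner_apply_eq_of_shift hk hΦnorm hshift hmt, sub_zero]
      _ = F (0 - -t) := by rw [← hk _ hmt _ h0, real_inner_comm, hk _ h0 _ hmt]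
      _ = F t := by rw [zero_sub, neg_neg]

/-- Given a realization `(H, k)` of the kernel `(u,v) ↦ F (u - v)` of a continuous
positive-definite function `F` on `[-a, a]`, and a strongly continuous contraction semigroup
`(Φ_t)_{t ≥ 0}` on `H` with `Φ_t (k u) = k (u - t)` for `0 ≤ t ≤ u ≤ a`, the function
`t ↦ ⟪k 0, Φ_{|t|} (k 0)⟫` is positive-definite on `ℝ` and extends `F`. -/
theorem semigroup_gives_canonical_extension {H : Type*}
    [NormedAddCommGroup H] [InnerProductSpace ℝ H] [CompleteSpace H]
    (a : ℝ) (ha : 0 < a) (F : ℝ → ℝ)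
    (hFc : Continuous F) (hF : IsPosDefOn (Set.Icc (-a) a) F)
    (k : ℝ → H)
    (hk : ∀ u ∈ Set.Icc (0 : ℝ) a, ∀ v ∈ Set.Icc (0 : ℝ) a, ⟪k u, k v⟫ = F (u - v))
    (hd : Dense (Submodule.span ℝ (k '' Set.Icc (0 : ℝ) a) : Set H))
    (Φ : ℝ → H →L[ℝ] H)
    (hΦ0 : Φ 0 = ContinuousLinearMap.id ℝ H)
    (hΦcomp : ∀ s t : ℝ, 0 ≤ s → 0 ≤ t → (Φ s).comp (Φ t) = Φ (s + t))
    (hΦnorm : ∀ t : ℝ, 0 ≤ t → ‖Φ t‖ ≤ 1)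
    (hΦcont : ∀ g : H, ContinuousOn (fun t => Φ t g) (Set.Ici (0 : ℝ)))
    (hshift : ∀ t u : ℝ, 0 ≤ t → t ≤ u → u ≤ a → Φ t (k u) = k (u - t)) :
    IsPosDefOn Set.univ (fun t => ⟪k 0, Φ |t| (k 0)⟫) ∧
      ∀ t ∈ Set.Icc (-a) a, ⟪k 0, Φ |t| (k 0)⟫ = F t :=
  semigroup_gives_canonical_extension_general a F k hk Φ hΦ0 hΦcomp hΦnorm hshift
end
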